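/- arXiv:1303.5216 — 4 statements merged into one kernel-verified Lean document; each statement's English description precedes it below -/
import Mathlib

section
/- Let σ lie on the unit circle, λ ∈ ℝ, and let p be holomorphic on the open unit disc with Re p ≥ 0. Define G(z) = (z-σ)(σ̄z-1)(p(z) - (λ/2)(σ+z)/(σ-z)). Then for all z in the unit disc, |G(z)| ≤ 4(√2·|G(0)| + (√2+1)·|λ|/2) · |σ-z|²/(1-|z|²). -/
/-!
The Cayley transform `(p - p 0) / (p + conj (p 0))` maps the disc into the closed disc and fixes `0`, so
Schwarz's lemma gives the Carathéodory growth bound `‖p z‖ (1 - ‖z‖) ≤ ‖p 0‖ (1 + ‖z‖)` (first when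
`Re p 0 > 0`, then in general by perturbing `p` by a small positive constant). Expanding `G` as
`(z - σ)(σ̄z - 1) p z + (λ/2)(σ + z)(σ̄z - 1)` and using `‖σ̄z - 1‖ = ‖σ - z‖ ≥ 1 - ‖z‖` turns this
into `‖G z‖ (1 - ‖z‖²) ≤ (4‖p 0‖ + 2|λ|) ‖σ - z‖²`, and `G 0 = σ (p 0 - λ/2)` controls `‖p 0‖`.
-/

open Complex Metric Filter Topology
open scoped ComplexConjugate

lemma norm_sub_le_norm_add_conj {w a : ℂ} (hw : 0 ≤ w.re) (ha : 0 ≤ a.re) :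
    ‖w - a‖ ≤ ‖w + conj a‖ := by
  refine (sq_le_sq₀ (norm_nonneg _) (norm_nonneg _)).1 ?_
  simp only [Complex.sq_norm, Complex.normSq_apply, Complex.sub_re, Complex.sub_im,
    Complex.add_re, Complex.add_im, Complex.conj_re, Complex.conj_im]
  nlinarith [mul_nonneg hw ha]

section Caratheodory

variable {p : ℂ → ℂ} {z : ℂ}

lemma norm_mul_one_sub_le_of_re_zero_pos (hp : DifferentiableOn ℂ p (ball 0 1))
    (hre : ∀ w ∈ ball (0 : ℂ) 1, 0 ≤ (p w).re) (hre₀ : 0 < (p 0).re) (hz : z ∈ ball (0 : ℂ) 1) :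
    ‖p z‖ * (1 - ‖z‖) ≤ ‖p 0‖ * (1 + ‖z‖) := by
  set a := p 0
  have hden : ∀ w ∈ ball (0 : ℂ) 1, p w + conj a ≠ 0 := fun w hw h => by
    have := congrArg Complex.re h
    simp only [Complex.add_re, Complex.conj_re, Complex.zero_re] at this
    linarith [hre w hw]
  set f : ℂ → ℂ := fun w => (p w - a) / (p w + conj a)
  have hf : DifferentiableOn ℂ f (ball 0 1) :=
    (hp.sub_const a).div (hp.add_const (conj a)) hden
  have hmaps : Set.MapsTo f (ball 0 1) (closedBall 0 1) := fun w hw => by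
    rw [mem_closedBall_zero_iff, norm_div]
    exact div_le_one_of_le₀ (norm_sub_le_norm_add_conj (hre w hw) hre₀.le) (norm_nonneg _)
  have hschwarz : ‖f z‖ ≤ ‖z‖ :=
    Complex.norm_le_norm_of_mapsTo_ball hf hmaps (by simp [f, a]) (mem_ball_zero_iff.1 hz)
  have hcayley : ‖p z - a‖ ≤ ‖z‖ * ‖p z + conj a‖ := by
    rw [← div_le_iff₀ (norm_pos_iff.2 (hden z hz)), ← norm_div]
    exact hschwarz
  have h₁ := norm_sub_norm_le (p z) a
  have h₂ : ‖p z + conj a‖ ≤ ‖p z‖ + ‖a‖ := (norm_add_le _ _).trans_eq (by rw [Complex.norm_conj])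
  nlinarith [mul_le_mul_of_nonneg_left h₂ (norm_nonneg z)]

lemma norm_mul_one_sub_le_of_re_nonneg (hp : DifferentiableOn ℂ p (ball 0 1))
    (hre : ∀ w ∈ ball (0 : ℂ) 1, 0 ≤ (p w).re) (hz : z ∈ ball (0 : ℂ) 1) :
    ‖p z‖ * (1 - ‖z‖) ≤ ‖p 0‖ * (1 + ‖z‖) := by
  have hshift : ∀ ε : ℝ, 0 < ε → ‖p z + ε‖ * (1 - ‖z‖) ≤ ‖p 0 + ε‖ * (1 + ‖z‖) :=
    fun ε hε => norm_mul_one_sub_le_of_re_zero_pos (p := fun w => p w + ε) (hp.add_const _)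
      (fun w hw => by simpa using add_nonneg (hre w hw) hε.le)
      (by simpa using add_pos_of_nonneg_of_pos (hre 0 (mem_ball_self one_pos)) hε) hz
  have hcont : ∀ (c : ℂ) (r : ℝ), Continuous fun ε : ℝ => ‖c + ε‖ * r := by fun_prop
  refine le_of_tendsto_of_tendsto (b := 𝓝[>] (0 : ℝ)) ?_ ?_
    (eventually_nhdsWithin_of_forall fun ε hε => hshift ε hε)
  · simpa using ((hcont (p z) _).tendsto 0).mono_left nhdsWithin_le_nhds
  · simpa using ((hcont (p 0) _).tendsto 0).mono_left nhdsWithin_le_nhds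

end Caratheodory

section BerksonPorta

variable {σ z : ℂ}

lemma norm_conj_mul_sub_one (hσ : ‖σ‖ = 1) (z : ℂ) : ‖conj σ * z - 1‖ = ‖σ - z‖ := by
  have hσσ : conj σ * σ = 1 := by
    rw [mul_comm, Complex.mul_conj, Complex.normSq_eq_norm_sq, hσ]; norm_num
  rw [← hσσ, ← mul_sub, norm_mul, Complex.norm_conj, hσ, one_mul, norm_sub_rev]

lemma norm_berksonPorta_zero (hσ : ‖σ‖ = 1) (lam : ℝ) (w : ℂ) :
    ‖(0 - σ) * (conj σ * 0 - 1) * (w - (lam / 2 : ℂ) * (σ + 0) / (σ - 0))‖ = ‖w - (lam / 2 : ℂ)‖ := by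
  have hσ₀ : σ ≠ 0 := norm_ne_zero_iff.1 (by rw [hσ]; exact one_ne_zero)
  rw [mul_zero, add_zero, sub_zero, zero_sub, mul_div_assoc, div_self hσ₀, mul_one, norm_mul,
    norm_mul, norm_neg, hσ]
  simp

lemma norm_berksonPorta_le (hσ : ‖σ‖ = 1) (hz : ‖z‖ ≤ 1) (hzσ : z ≠ σ) (lam : ℝ) (w : ℂ) :
    ‖(z - σ) * (conj σ * z - 1) * (w - (lam / 2 : ℂ) * (σ + z) / (σ - z))‖ ≤
      ‖σ - z‖ ^ 2 * ‖w‖ + |lam| * ‖σ - z‖ := by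
  have hσz : σ - z ≠ 0 := sub_ne_zero.2 hzσ.symm
  have hexpand : (z - σ) * (conj σ * z - 1) * (w - (lam / 2 : ℂ) * (σ + z) / (σ - z)) =
      (z - σ) * (conj σ * z - 1) * w + (lam / 2 : ℂ) * (σ + z) * (conj σ * z - 1) := by
    field_simp
    ring
  have hlam : ‖(lam / 2 : ℂ)‖ = |lam| / 2 := by
    rw [norm_div, Complex.norm_real, Real.norm_eq_abs, Complex.norm_two]
  have hσplus : ‖σ + z‖ ≤ 2 := (norm_add_le _ _).trans (by linarith)
  rw [hexpand]
  refine (norm_add_le _ _).trans ?_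
  rw [norm_mul, norm_mul, norm_mul, norm_mul, norm_conj_mul_sub_one hσ, hlam, norm_sub_rev z σ]
  nlinarith [mul_le_mul_of_nonneg_left hσplus (mul_nonneg (abs_nonneg lam) (norm_nonneg (σ - z)))]

lemma norm_berksonPorta_mul_one_sub_sq_le {p : ℂ → ℂ} (hσ : ‖σ‖ = 1) (lam : ℝ)
    (hp : DifferentiableOn ℂ p (ball 0 1)) (hre : ∀ w ∈ ball (0 : ℂ) 1, 0 ≤ (p w).re)
    (hz : z ∈ ball (0 : ℂ) 1) :
    ‖(z - σ) * (conj σ * z - 1) * (p z - (lam / 2 : ℂ) * (σ + z) / (σ - z))‖ * (1 - ‖z‖ ^ 2) ≤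
      ‖σ - z‖ ^ 2 * (4 * ‖p 0‖ + 2 * |lam|) := by
  have hz₁ : ‖z‖ < 1 := mem_ball_zero_iff.1 hz
  have hz₀ := norm_nonneg z
  have hzσ : z ≠ σ := by rintro rfl; linarith
  have hgrowth := norm_mul_one_sub_le_of_re_nonneg hp hre hz
  have hdist : 1 - ‖z‖ ≤ ‖σ - z‖ := by simpa [hσ] using norm_sub_norm_le σ z
  calc _ ≤ (‖σ - z‖ ^ 2 * ‖p z‖ + |lam| * ‖σ - z‖) * (1 - ‖z‖ ^ 2) := by
        gcongr
        · nlinarith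
        · exact norm_berksonPorta_le hσ hz₁.le hzσ lam (p z)
    _ = ‖σ - z‖ ^ 2 * (‖p z‖ * (1 - ‖z‖)) * (1 + ‖z‖)
          + |lam| * ‖σ - z‖ * (1 - ‖z‖) * (1 + ‖z‖) := by ring
    _ ≤ ‖σ - z‖ ^ 2 * (‖p 0‖ * (1 + ‖z‖)) * 2 + |lam| * ‖σ - z‖ * ‖σ - z‖ * 2 := by
        gcongr <;> linarith
    _ ≤ ‖σ - z‖ ^ 2 * (4 * ‖p 0‖ + 2 * |lam|) := by
        nlinarith [mul_nonneg (sq_nonneg ‖σ - z‖) (norm_nonneg (p 0))]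

end BerksonPorta

theorem stmt_3 (σ : ℂ) (hσ : ‖σ‖ = 1) (lam : ℝ) (p : ℂ → ℂ)
    (hp : DifferentiableOn ℂ p (Metric.ball (0 : ℂ) 1))
    (hre : ∀ z ∈ Metric.ball (0 : ℂ) 1, 0 ≤ (p z).re)
    (G : ℂ → ℂ)
    (hG : ∀ z ∈ Metric.ball (0 : ℂ) 1,
      G z = (z - σ) * (conj σ * z - 1) * (p z - (lam / 2 : ℂ) * (σ + z) / (σ - z))) :
    ∀ z ∈ Metric.ball (0 : ℂ) 1,
      ‖G z‖ ≤
        4 * (Real.sqrt 2 * ‖G 0‖ + (Real.sqrt 2 + 1) * |lam| / 2) *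
          (‖σ - z‖) ^ 2 / (1 - (‖z‖) ^ 2) := by
  intro z hz
  have hG₀ : ‖p 0‖ ≤ ‖G 0‖ + |lam| / 2 := by
    have h := norm_sub_norm_le (p 0) (lam / 2 : ℂ)
    rw [hG 0 (mem_ball_self one_pos), norm_berksonPorta_zero hσ]
    rw [norm_div, Complex.norm_real, Real.norm_eq_abs, Complex.norm_two] at h
    linarith
  have hsqrt : 1 ≤ Real.sqrt 2 := Real.one_le_sqrt.2 (by norm_num)
  have hz₁ : ‖z‖ < 1 := mem_ball_zero_iff.1 hz
  rw [le_div_iff₀ (by nlinarith [norm_nonneg z]), hG z hz]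
  refine (norm_berksonPorta_mul_one_sub_sq_le hσ lam hp hre hz).trans ?_
  rw [mul_comm]
  gcongr
  nlinarith [norm_nonneg (G 0), abs_nonneg lam]
end

section
/- Let p be holomorphic on the open unit disc with Re p(z) ≥ 0 for all z. Then |p(z)| ≤ √2·|p(0)|·(1+|z|)/(1-|z|) for all z in the unit disc. -/
/-!
For `Re p > 0`, the Cayley transform `φ = (p - p 0) / (p + conj (p 0))` maps the unit disc into
itself and fixes `0`, so Schwarz's lemma gives `‖φ z‖ ≤ ‖z‖`. Solving for `p z`,
`p z * (1 - φ z) = p 0 + conj (p 0) * φ z`, yields the Harnack-type bound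
`‖p z‖ ≤ ‖p 0‖ (1 + ‖z‖) / (1 - ‖z‖)`. The case `Re p ≥ 0` follows
by applying this to `p + ε` and letting `ε → 0⁺`.
-/

open Metric Complex ComplexConjugate Filter Topology

namespace Complex

theorem norm_sub_sq_add_four_re_mul_re (a b : ℂ) :
    ‖a - b‖ ^ 2 + 4 * a.re * b.re = ‖a + conj b‖ ^ 2 := by
  simp only [Complex.sq_norm, normSq_apply, sub_re, sub_im, add_re, add_im, conj_re, conj_im]
  ring

theorem norm_sub_lt_norm_add_conj {a b : ℂ} (ha : 0 < a.re) (hb : 0 < b.re) :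
    ‖a - b‖ < ‖a + conj b‖ := by
  refine lt_of_pow_lt_pow_left₀ 2 (norm_nonneg _) ?_
  rw [← norm_sub_sq_add_four_re_mul_re]
  have := mul_pos ha hb
  linarith

theorem add_conj_ne_zero_of_re_pos {a b : ℂ} (ha : 0 < a.re) (hb : 0 < b.re) :
    a + conj b ≠ 0 := fun h => by
  simpa [h] using (norm_nonneg (a - b)).trans_lt (norm_sub_lt_norm_add_conj ha hb)

theorem norm_le_of_norm_div_add_conj_le {a b : ℂ} {r : ℝ} (hab : a + conj b ≠ 0) (hr : r < 1)
    (h : ‖(a - b) / (a + conj b)‖ ≤ r) : ‖a‖ ≤ ‖b‖ * (1 + r) / (1 - r) := by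
  set q := (a - b) / (a + conj b)
  have hsolve : a * (1 - q) = b + conj b * q := by
    simp only [q]
    field_simp
    ring
  have hq : 1 - r ≤ ‖1 - q‖ := by
    have := norm_sub_norm_le (1 : ℂ) q
    rw [norm_one] at this
    linarith
  rw [le_div_iff₀ (by linarith)]
  calc ‖a‖ * (1 - r) ≤ ‖a‖ * ‖1 - q‖ := by gcongr
    _ = ‖b + conj b * q‖ := by rw [← norm_mul, hsolve]
    _ ≤ ‖b‖ + ‖b‖ * ‖q‖ := by
        simpa only [norm_mul, norm_conj] using norm_add_le b (conj b * q)
    _ ≤ ‖b‖ * (1 + r) := by nlinarith [norm_nonneg b]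

theorem norm_le_of_forall_re_pos {p : ℂ → ℂ} (hp : DifferentiableOn ℂ p (ball 0 1))
    (hre : ∀ w ∈ ball (0 : ℂ) 1, 0 < (p w).re) {z : ℂ} (hz : ‖z‖ < 1) :
    ‖p z‖ ≤ ‖p 0‖ * (1 + ‖z‖) / (1 - ‖z‖) := by
  have h0 : (0 : ℂ) ∈ ball (0 : ℂ) 1 := mem_ball_self one_pos
  have hden : ∀ w ∈ ball (0 : ℂ) 1, p w + conj (p 0) ≠ 0 := fun w hw =>
    add_conj_ne_zero_of_re_pos (hre w hw) (hre 0 h0)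
  set φ : ℂ → ℂ := fun w => (p w - p 0) / (p w + conj (p 0))
  have hφ : DifferentiableOn ℂ φ (ball 0 1) :=
    (hp.sub_const _).div (hp.add_const _) hden
  have hmaps : Set.MapsTo φ (ball 0 1) (closedBall 0 1) := fun w hw => by
    rw [mem_closedBall_zero_iff, norm_div, div_le_one (norm_pos_iff.mpr (hden w hw))]
    exact (norm_sub_lt_norm_add_conj (hre w hw) (hre 0 h0)).le
  have hschwarz : ‖φ z‖ ≤ ‖z‖ :=
    norm_le_norm_of_mapsTo_ball hφ hmaps (by simp [φ]) hz
  exact norm_le_of_norm_div_add_conj_le (hden z (mem_ball_zero_iff.mpr hz)) hz hschwarz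

theorem norm_le_of_forall_re_nonneg {p : ℂ → ℂ} (hp : DifferentiableOn ℂ p (ball 0 1))
    (hre : ∀ w ∈ ball (0 : ℂ) 1, 0 ≤ (p w).re) {z : ℂ} (hz : ‖z‖ < 1) :
    ‖p z‖ ≤ ‖p 0‖ * (1 + ‖z‖) / (1 - ‖z‖) := by
  have hlim : ∀ w : ℂ, Tendsto (fun ε : ℝ => ‖p w + ε‖) (𝓝[>] 0) (𝓝 ‖p w‖) := fun w => by
    refine tendsto_nhdsWithin_of_tendsto_nhds ?_
    simpa using ((continuous_const.add continuous_ofReal).norm.tendsto (0 : ℝ) :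
      Tendsto (fun ε : ℝ => ‖p w + ε‖) (𝓝 0) _)
  refine le_of_tendsto_of_tendsto (hlim z) (((hlim 0).mul_const _).div_const _) ?_
  filter_upwards [self_mem_nhdsWithin] with ε (hε : 0 < ε)
  refine norm_le_of_forall_re_pos (p := fun w => p w + ε) (hp.add_const _) (fun w hw => ?_) hz
  simpa using add_pos_of_nonneg_of_pos (hre w hw) hε

end Complex

theorem stmt_4 (p : ℂ → ℂ)
    (hp : DifferentiableOn ℂ p (Metric.ball (0 : ℂ) 1))
    (hre : ∀ z ∈ Metric.ball (0 : ℂ) 1, 0 ≤ (p z).re) :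
    ∀ z ∈ Metric.ball (0 : ℂ) 1,
      ‖p z‖ ≤
        Real.sqrt 2 * ‖p 0‖ * (1 + ‖z‖) / (1 - ‖z‖) := by
  intro z hz
  have hz1 : ‖z‖ < 1 := mem_ball_zero_iff.mp hz
  calc ‖p z‖ ≤ ‖p 0‖ * (1 + ‖z‖) / (1 - ‖z‖) := Complex.norm_le_of_forall_re_nonneg hp hre hz1
    _ ≤ Real.sqrt 2 * ‖p 0‖ * (1 + ‖z‖) / (1 - ‖z‖) := by
        have : 1 ≤ Real.sqrt 2 := Real.one_le_sqrt.mpr (by norm_num)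
        have : 0 < 1 - ‖z‖ := by linarith
        gcongr
        nlinarith [norm_nonneg (p 0)]
end

section
/- Let h_t(z) = (z + ζ(t))/(1 + conj(ζ(t))·z) where ζ(t), ζ(s) lie in the open unit disc, and let b lie on the unit circle. Then |h_t(b) - h_s(b)| ≤ 2·(|ζ(t)-ζ(s)| + |Im(ζ(t)·conj(ζ(s)))|) / ((1-|ζ(t)|)(1-|ζ(s)|)) ≤ 4|ζ(t)-ζ(s)| / ((1-|ζ(t)|)(1-|ζ(s)|)). -/
/-!
Over the common denominator `(1 + conj ζt b) (1 + conj ζs b)`, whose factors have modulus at least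
`1 - |ζt|` and `1 - |ζs|`, the numerator is `(ζt - ζs) + b² conj (ζs - ζt) + 2 i b Im (ζt conj ζs)`,
of modulus at most `2 (|ζt - ζs| + |Im (ζt conj ζs)|)` because `|b| = 1`. The second inequality holds
because `Im (ζt conj ζs) = Im ((ζt - ζs) conj ζs)`, as `ζs conj ζs` is real.
-/

open Complex
open scoped ComplexConjugate

namespace Complex

lemma one_sub_norm_le_norm_one_add_conj_mul (a : ℂ) {b : ℂ} (hb : ‖b‖ = 1) :
    1 - ‖a‖ ≤ ‖1 + conj a * b‖ := by
  simpa [hb] using norm_sub_le_norm_add (1 : ℂ) (conj a * b)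

lemma mobius_cross_sub_eq (a c b : ℂ) :
    (b + a) * (1 + conj c * b) - (1 + conj a * b) * (b + c) =
      (a - c) + b ^ 2 * conj (c - a) + b * ((2 * (a * conj c).im : ℝ) * I) := by
  rw [← sub_conj, map_sub, map_mul, conj_conj]
  ring

lemma norm_mobius_cross_sub_le (a c : ℂ) {b : ℂ} (hb : ‖b‖ = 1) :
    ‖(b + a) * (1 + conj c * b) - (1 + conj a * b) * (b + c)‖ ≤
      2 * (‖a - c‖ + |(a * conj c).im|) := by
  rw [mobius_cross_sub_eq]
  calc _ ≤ ‖a - c‖ + ‖b ^ 2 * conj (c - a)‖ + ‖b * ((2 * (a * conj c).im : ℝ) * I)‖ :=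
        norm_add₃_le
    _ = 2 * (‖a - c‖ + |(a * conj c).im|) := by
      simp only [norm_mul, norm_pow, hb, norm_conj, norm_sub_rev c a, norm_I, norm_real,
        Real.norm_eq_abs, abs_two]
      ring

lemma abs_im_mul_conj_le_norm_sub (a : ℂ) {c : ℂ} (hc : ‖c‖ ≤ 1) :
    |(a * conj c).im| ≤ ‖a - c‖ :=
  calc |(a * conj c).im| = |((a - c) * conj c).im| := by simp [sub_mul, mul_conj]
    _ ≤ ‖(a - c) * conj c‖ := abs_im_le_norm _
    _ = ‖a - c‖ * ‖c‖ := by rw [norm_mul, norm_conj]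
    _ ≤ ‖a - c‖ := mul_le_of_le_one_right (norm_nonneg _) hc

end Complex

theorem stmt_6 (ζt ζs : ℂ) (hζt : ‖ζt‖ < 1) (hζs : ‖ζs‖ < 1)
    (b : ℂ) (hb : ‖b‖ = 1) :
    ‖(b + ζt) / (1 + conj ζt * b) - (b + ζs) / (1 + conj ζs * b)‖ ≤
        2 * (‖ζt - ζs‖ + |(ζt * conj ζs).im|) /
          ((1 - ‖ζt‖) * (1 - ‖ζs‖)) ∧
      2 * (‖ζt - ζs‖ + |(ζt * conj ζs).im|) /
          ((1 - ‖ζt‖) * (1 - ‖ζs‖)) ≤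
        4 * ‖ζt - ζs‖ / ((1 - ‖ζt‖) * (1 - ‖ζs‖)) := by
  have hdt : 0 < 1 - ‖ζt‖ := sub_pos.2 hζt
  have hds : 0 < 1 - ‖ζs‖ := sub_pos.2 hζs
  have hAt := one_sub_norm_le_norm_one_add_conj_mul ζt hb
  have hAs := one_sub_norm_le_norm_one_add_conj_mul ζs hb
  constructor
  · rw [div_sub_div _ _ (norm_pos_iff.1 (hdt.trans_le hAt)) (norm_pos_iff.1 (hds.trans_le hAs)),
      norm_div, norm_mul]
    exact div_le_div₀ (by positivity) (norm_mobius_cross_sub_le ζt ζs hb) (by positivity)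
      (mul_le_mul hAt hAs hds.le (norm_nonneg _))
  · have him := abs_im_mul_conj_le_norm_sub ζt hζs.le
    gcongr ?_ / _
    linarith
end

section
/- Let β > 2 and r(t) = 1 - βt for t ∈ (0,T) with T small enough that r(t) > 1/2 on (0,T). Suppose ξ* : (0,T) → (0,1) is differentiable, satisfies dξ*/dt = -2ξ*(1-ξ*)/(1 - r(t)ξ*), and ξ*(t) → 1 as t → 0⁺. Then ξ* ≡ 1, a contradiction with ξ*(t) < 1; hence no such solution exists. -/
open Set Filter

theorem stmt_13 (β T : ℝ) (hβ : 2 < β) (hT0 : 0 < T) (hT : T < 1 / (2 * β))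
    (r : ℝ → ℝ) (hr : ∀ t, r t = 1 - β * t)
    (ξ : ℝ → ℝ)
    (hrange : ∀ t ∈ Set.Ioo 0 T, ξ t ∈ Set.Ioo (0 : ℝ) 1)
    (hode : ∀ t ∈ Set.Ioo 0 T,
      HasDerivAt ξ (-2 * ξ t * (1 - ξ t) / (1 - r t * ξ t)) t)
    (hlim : Filter.Tendsto ξ (nhdsWithin 0 (Set.Ioi 0)) (nhds 1)) :
    False := by
  have hβ0 : (0:ℝ) < β := by linarith
  set u : ℝ → ℝ := fun t => (1 - ξ t) / t with hu
  -- Mean value theorem step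
  have key : ∀ t ∈ Set.Ioo 0 T, ∃ c ∈ Set.Ioo 0 t,
      u t = 2 * ξ c * (1 - ξ c) / ((1 - ξ c) + β * c * ξ c) := by
    intro t ht
    obtain ⟨ht0, htT⟩ := ht
    set η : ℝ → ℝ := fun s => if s = 0 then 1 else ξ s with hη
    have hsub : ∀ s ∈ Set.Ioo (0:ℝ) t, s ∈ Set.Ioo 0 T := by
      intro s hs; exact ⟨hs.1, hs.2.trans htT⟩
    have hηeq : ∀ s : ℝ, s ≠ 0 → η s = ξ s := by
      intro s hs; simp [hη, hs]
    -- continuity on [0, t]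
    have hcont : ContinuousOn η (Set.Icc 0 t) := by
      intro s hs
      rcases eq_or_lt_of_le hs.1 with h0 | h0
      · -- s = 0
        subst h0
        have h1 : Filter.Tendsto η (nhdsWithin 0 (Set.Ioi 0)) (nhds 1) := by
          refine hlim.congr' ?_
          filter_upwards [self_mem_nhdsWithin] with x hx
          exact (hηeq x (ne_of_gt hx)).symm
        have h2 : Filter.Tendsto η (pure (0:ℝ)) (nhds 1) := by
          have : η 0 = 1 := by simp [hη]
          rw [← this]; exact tendsto_pure_nhds η 0
        have h3 : Filter.Tendsto η (nhdsWithin 0 (insert 0 (Set.Ioi 0))) (nhds 1) := by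
          rw [nhdsWithin_insert]
          exact Filter.Tendsto.sup h2 h1
        have : ContinuousWithinAt η (insert 0 (Set.Ioi 0)) 0 := by
          have : η 0 = 1 := by simp [hη]
          unfold ContinuousWithinAt
          rw [this]; exact h3
        refine this.mono ?_
        intro x hx
        rcases eq_or_lt_of_le hx.1 with h | h
        · exact Or.inl h.symm
        · exact Or.inr h
      · -- s > 0
        have hsT : s ∈ Set.Ioo 0 T := ⟨h0, lt_of_le_of_lt hs.2 htT⟩
        have hca : ContinuousAt ξ s := (hode s hsT).continuousAt
        have heq : η =ᶠ[nhds s] ξ := by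
          filter_upwards [eventually_ne_nhds (ne_of_gt h0)] with x hx
          exact hηeq x hx
        exact (hca.congr heq.symm).continuousWithinAt
    -- derivative on (0, t)
    have hderiv : ∀ s ∈ Set.Ioo 0 t,
        HasDerivAt η (-2 * ξ s * (1 - ξ s) / (1 - r s * ξ s)) s := by
      intro s hs
      have hsT := hsub s hs
      have heq : η =ᶠ[nhds s] ξ := by
        filter_upwards [eventually_ne_nhds (ne_of_gt hs.1)] with x hx
        exact hηeq x hx
      exact (hode s hsT).congr_of_eventuallyEq heq
    obtain ⟨c, hc, hceq⟩ := exists_hasDerivAt_eq_slope η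
      (fun s => -2 * ξ s * (1 - ξ s) / (1 - r s * ξ s)) ht0 hcont hderiv
    refine ⟨c, hc, ?_⟩
    have hcT := hsub c hc
    obtain ⟨hξc0, hξc1⟩ := hrange c hcT
    have hden : 1 - r c * ξ c = (1 - ξ c) + β * c * ξ c := by
      rw [hr c]; ring
    have hdpos : (0:ℝ) < (1 - ξ c) + β * c * ξ c := by
      have : 0 < β * c * ξ c := mul_pos (mul_pos hβ0 hc.1) hξc0
      nlinarith
    have hη0 : η 0 = 1 := by simp [hη]
    have hηt : η t = ξ t := hηeq t (ne_of_gt ht0)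
    rw [hη0, hηt] at hceq
    rw [hden] at hceq
    have : u t = -((ξ t - 1) / (t - 0)) := by
      show (1 - ξ t) / t = _
      rw [sub_zero, ← neg_div, neg_sub]
    rw [this, ← hceq]
    field_simp
  -- bounds by induction
  have h2β : 0 < 2 / β := by positivity
  have bound : ∀ n : ℕ, ∀ t ∈ Set.Ioo 0 T, u t ≤ 2 * (2 / β) ^ n := by
    intro n
    induction n with
    | zero =>
      intro t ht
      obtain ⟨c, hc, hceq⟩ := key t ht
      have hcT : c ∈ Set.Ioo 0 T := ⟨hc.1, hc.2.trans ht.2⟩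
      obtain ⟨hξc0, hξc1⟩ := hrange c hcT
      have hdpos : (0:ℝ) < (1 - ξ c) + β * c * ξ c := by
        have : 0 < β * c * ξ c := mul_pos (mul_pos hβ0 hc.1) hξc0
        nlinarith
      rw [hceq]
      rw [div_le_iff₀ hdpos]
      simp only [pow_zero, mul_one]
      nlinarith [hc.1, mul_pos (mul_pos hβ0 hc.1) hξc0]
    | succ n ih =>
      intro t ht
      obtain ⟨c, hc, hceq⟩ := key t ht
      have hcT : c ∈ Set.Ioo 0 T := ⟨hc.1, hc.2.trans ht.2⟩
      obtain ⟨hξc0, hξc1⟩ := hrange c hcT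
      have hdpos : (0:ℝ) < (1 - ξ c) + β * c * ξ c := by
        have : 0 < β * c * ξ c := mul_pos (mul_pos hβ0 hc.1) hξc0
        nlinarith
      have hstep : u t ≤ (2 / β) * u c := by
        rw [hceq]
        have huc : u c = (1 - ξ c) / c := rfl
        rw [huc, div_mul_div_comm]
        rw [div_le_div_iff₀ hdpos (mul_pos hβ0 hc.1)]
        nlinarith [sq_nonneg (1 - ξ c), hc.1, hξc0, hξc1]
      calc u t ≤ (2 / β) * u c := hstep
        _ ≤ (2 / β) * (2 * (2 / β) ^ n) := by
            exact mul_le_mul_of_nonneg_left (ih c hcT) (le_of_lt h2β)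
        _ = 2 * (2 / β) ^ (n + 1) := by ring
  -- conclude
  have ht0 : T / 2 ∈ Set.Ioo 0 T := ⟨by linarith, by linarith⟩
  obtain ⟨hp0, hp1⟩ := hrange (T / 2) ht0
  have hupos : 0 < u (T / 2) := by
    have : 0 < (1 - ξ (T/2)) := by linarith
    exact div_pos this (by linarith)
  have hlt1 : 2 / β < 1 := by
    rw [div_lt_one hβ0]; linarith
  have htend : Filter.Tendsto (fun n : ℕ => 2 * (2 / β) ^ n) Filter.atTop (nhds 0) := by
    have := tendsto_pow_atTop_nhds_zero_of_lt_one (le_of_lt h2β) hlt1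
    simpa using this.const_mul 2
  have : ∀ᶠ n in Filter.atTop, 2 * (2 / β) ^ n < u (T / 2) :=
    htend.eventually_lt_const hupos
  obtain ⟨n, hn⟩ := this.exists
  exact absurd (bound n (T / 2) ht0) (not_le.mpr hn)
end
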